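/- The multiplication of groves of planar binary trees is distributive on the left with respect to the left sum, the right sum and the sum: for all groves A, A', B of positive degree, (A ⊣ A') × B = (A × B) ⊣ (A' × B), (A ⊢ A') × B = (A × B) ⊢ (A' × B), and (A + A') × B = (A × B) + (A' × B). -/

import Mathlib

/-- A planar binary tree: a leaf `|` or a grafting `x ∨ y`. -/
inductive PBT : Type
  | leaf : PBT
  | node : PBT → PBT → PBT
  deriving DecidableEq

namespace PBT

/-- The degree: number of internal vertices. -/
def deg : PBT → ℕ
  | leaf => 0
  | node l r => deg l + deg r + 1

/-- The set `Y n` of planar binary trees of degree `n`. -/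
def Y (n : ℕ) : Set PBT := {t | t.deg = n}

/-- The `over` operation `x / y`. -/
def overOp : PBT → PBT → PBT
  | x, leaf => x
  | x, node yl yr => node (overOp x yl) yr

/-- The `under` operation `x \ y`. -/
def under : PBT → PBT → PBT
  | leaf, y => y
  | node xl xr, y => node xl (under xr y)

/-- The Tamari order, generated by `(x ∨ y) ∨ z ≤ x ∨ (y ∨ z)` and compatibility
with grafting on both sides. -/
inductive tle : PBT → PBT → Prop
  | refl (x : PBT) : tle x x
  | trans {x y z : PBT} : tle x y → tle y z → tle x z
  | rotate (x y z : PBT) : tle (node (node x y) z) (node x (node y z))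
  | node_left {x y : PBT} (z : PBT) : tle x y → tle (node x z) (node y z)
  | node_right {x y : PBT} (z : PBT) : tle x y → tle (node z x) (node z y)

/-- The sum of two planar binary trees: the Tamari interval `[x/y, x\y]`
(a subset of `Y (deg x + deg y)`). -/
def sum (x y : PBT) : Set PBT := {z | tle (overOp x y) z ∧ tle z (under x y)}

/-- A grove of degree `n`: a nonempty subset of `Y n`. -/
def Grove (n : ℕ) (A : Set PBT) : Prop := A.Nonempty ∧ ∀ x ∈ A, x.deg = n

/-- The sum of groves. -/
def gsum (A B : Set PBT) : Set PBT := ⋃ x ∈ A, ⋃ y ∈ B, sum x y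

/-- The reflection involution σ. -/
def σ : PBT → PBT
  | leaf => leaf
  | node l r => node (σ r) (σ l)

/-- The left sum `x ⊣ y` of trees (with the conventions `x ⊣ | = {x}`, `| ⊣ y = {|}`). -/
def lsum : PBT → PBT → Set PBT
  | x, leaf => {x}
  | leaf, _ => {leaf}
  | node xl xr, y => (fun z => node xl z) '' sum xr y

/-- The right sum `x ⊢ y` of trees (with the conventions `| ⊢ y = {y}`, `x ⊢ | = {|}`). -/
def rsum : PBT → PBT → Set PBT
  | leaf, y => {y}
  | _, leaf => {leaf}
  | x, node yl yr => (fun z => node z yr) '' sum x yl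

/-- Left sum of groves. -/
def glsum (A B : Set PBT) : Set PBT := ⋃ x ∈ A, ⋃ y ∈ B, lsum x y

/-- Right sum of groves. -/
def grsum (A B : Set PBT) : Set PBT := ⋃ x ∈ A, ⋃ y ∈ B, rsum x y

/-- Multiplication of a tree by a grove:
`| × B = {|}` and `(xˡ ∨ xʳ) × B = ((xˡ × B) ⊢ B) ⊣ (xʳ × B)`.
(The conventions `{|} ⊢ B = B` and `A ⊣ {|} = A` are built into `rsum`/`lsum`.) -/
def tmul : PBT → Set PBT → Set PBT
  | leaf, _ => {leaf}
  | node l r, B => glsum (grsum (tmul l B) B) (tmul r B)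

/-- Multiplication of groves. -/
def gmul (A B : Set PBT) : Set PBT := ⋃ x ∈ A, tmul x B

end PBT

/-!
For trees `x = xˡ ∨ xʳ` and `y = yˡ ∨ yʳ` the Tamari interval `x + y = [x/y, x\y]` splits as
`(x ⊣ y) ∪ (x ⊢ y)`: a tree `a ∨ b` of the interval has `a = xˡ` or `b = yʳ`. This is read off
the right arm of `x\y`, which every tree below it must follow (`tle.exists_isTail`, `tle.cut`),
and, through the order-reversing mirror `σ`, off the left arm of `x/y`. The splitting makes `+`
associative and yields the dendriform relations `(x ⊣ y) ⊣ z = x ⊣ (y + z)`,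
`(x ⊢ y) ⊣ z = x ⊢ (y ⊣ z)` and `(x + y) ⊢ z = x ⊢ (y ⊢ z)`, which hold for all trees thanks to
the conventions at `|`. Unfolding `(xˡ ∨ xʳ) × B = ((xˡ × B) ⊢ B) ⊣ (xʳ × B)`, each of
`(x ⊣ y) × B`, `(x ⊢ y) × B`, `(x + y) × B` is turned into the corresponding sum of `x × B` and
`y × B` by one or two of these relations and induction on the trees; groves follow by unions.
-/

namespace Set

variable {α β γ δ ε η ι : Type*}

/-- `gsum`, `glsum` and `grsum` are definitionally `bind₂ sum`, `bind₂ lsum` and `bind₂ rsum`. -/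
def bind₂ (f : α → β → Set γ) (A : Set α) (B : Set β) : Set γ := ⋃ x ∈ A, ⋃ y ∈ B, f x y

theorem mem_bind₂ {f : α → β → Set γ} {A : Set α} {B : Set β} {z : γ} :
    z ∈ bind₂ f A B ↔ ∃ x ∈ A, ∃ y ∈ B, z ∈ f x y := by
  simp only [bind₂, mem_iUnion, exists_prop]

theorem bind₂_biUnion_left (f : α → β → Set γ) (S : Set ι) (A : ι → Set α) (B : Set β) :
    bind₂ f (⋃ i ∈ S, A i) B = ⋃ i ∈ S, bind₂ f (A i) B := by
  simp only [bind₂, biUnion_iUnion]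

theorem bind₂_biUnion_right (f : α → β → Set γ) (A : Set α) (S : Set ι) (B : ι → Set β) :
    bind₂ f A (⋃ i ∈ S, B i) = ⋃ i ∈ S, bind₂ f A (B i) := by
  ext z
  simp only [bind₂, mem_iUnion, exists_prop]
  aesop

theorem bind₂_assoc {f : α → β → Set δ} {g : δ → γ → Set ε} {h : β → γ → Set η}
    {k : α → η → Set ε} (H : ∀ a b c, ⋃ t ∈ f a b, g t c = ⋃ u ∈ h b c, k a u)
    (A : Set α) (B : Set β) (C : Set γ) :
    bind₂ g (bind₂ f A B) C = bind₂ k A (bind₂ h B C) := by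
  ext z
  have H' := fun a b c => Set.ext_iff.mp (H a b c) z
  simp only [bind₂, mem_iUnion, exists_prop] at H' ⊢
  constructor
  · rintro ⟨t, ⟨a, ha, b, hb, ht⟩, c, hc, hz⟩
    obtain ⟨u, hu, hz⟩ := (H' a b c).mp ⟨t, ht, hz⟩
    exact ⟨a, ha, u, ⟨b, hb, c, hc, hu⟩, hz⟩
  · rintro ⟨a, ha, u, ⟨b, hb, c, hc, hu⟩, hz⟩
    obtain ⟨t, ht, hz⟩ := (H' a b c).mpr ⟨u, hu, hz⟩
    exact ⟨t, ⟨a, ha, b, hb, ht⟩, c, hc, hz⟩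

end Set

namespace PBT

theorem deg_overOp (x y : PBT) : (overOp x y).deg = x.deg + y.deg := by
  induction y with
  | leaf => simp [overOp, deg]
  | node a b ih _ => simp only [overOp, deg, ih]; omega

theorem deg_under (x y : PBT) : (under x y).deg = x.deg + y.deg := by
  induction x with
  | leaf => simp [under, deg]
  | node a b _ ih => simp only [under, deg, ih]; omega

theorem tle.deg_eq {x y : PBT} (h : tle x y) : x.deg = y.deg := by
  induction h with
  | refl => rfl
  | trans _ _ ih₁ ih₂ => exact ih₁.trans ih₂
  | rotate => simp only [deg]; omega
  | node_left _ _ ih | node_right _ _ ih => simp only [deg]; omega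

/-- Lowered by every rotation, which makes the Tamari order antisymmetric. -/
def leftWeight : PBT → ℕ
  | leaf => 0
  | node l r => leftWeight l + leftWeight r + deg l

theorem tle.leftWeight_le {x y : PBT} (h : tle x y) : y.leftWeight ≤ x.leftWeight := by
  induction h with
  | refl => exact le_rfl
  | trans _ _ ih₁ ih₂ => exact ih₂.trans ih₁
  | rotate => simp only [leftWeight, deg]; omega
  | node_left _ h ih => simp only [leftWeight, h.deg_eq]; omega
  | node_right _ _ ih => simp only [leftWeight]; omega

theorem tle.eq_of_leftWeight_eq {x y : PBT} (h : tle x y) (hw : x.leftWeight = y.leftWeight) :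
    x = y := by
  induction h with
  | refl => rfl
  | trans h₁ h₂ ih₁ ih₂ =>
    have := h₁.leftWeight_le
    have := h₂.leftWeight_le
    rw [ih₁ (by omega), ih₂ (by omega)]
  | rotate => simp only [leftWeight, deg] at hw; omega
  | node_left _ h ih => simp only [leftWeight, h.deg_eq] at hw; rw [ih (by omega)]
  | node_right _ _ ih => simp only [leftWeight] at hw; rw [ih (by omega)]

theorem tle.antisymm {x y : PBT} (h₁ : tle x y) (h₂ : tle y x) : x = y :=
  h₁.eq_of_leftWeight_eq (le_antisymm h₂.leftWeight_le h₁.leftWeight_le)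

theorem tle.node_node {a b c d : PBT} (h : tle (node a b) (node c d)) :
    c.deg ≤ a.deg ∧ (c.deg = a.deg → tle a c ∧ tle b d) := by
  generalize hs : node a b = s at h
  generalize ht : node c d = t at h
  induction h generalizing a b c d with
  | refl => subst hs; cases ht; exact ⟨le_rfl, fun _ => ⟨.refl _, .refl _⟩⟩
  | @trans s m t h₁ h₂ ih₁ ih₂ =>
    obtain ⟨p, q, rfl⟩ : ∃ p q, m = node p q := by
      cases m with
      | leaf => subst hs; have := h₁.deg_eq; simp [deg] at this
      | node p q => exact ⟨p, q, rfl⟩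
    obtain ⟨hle₁, heq₁⟩ := ih₁ hs rfl
    obtain ⟨hle₂, heq₂⟩ := ih₂ rfl ht
    refine ⟨hle₂.trans hle₁, fun he => ?_⟩
    obtain ⟨hpa, hqb⟩ := heq₁ (by omega)
    obtain ⟨hcp, hdq⟩ := heq₂ (by omega)
    exact ⟨hpa.trans hcp, hqb.trans hdq⟩
  | rotate x y z =>
    cases hs; cases ht
    refine ⟨by simp only [deg]; omega, fun he => ?_⟩
    simp only [deg] at he; omega
  | node_left z h =>
    cases hs; cases ht
    exact ⟨h.deg_eq.ge, fun _ => ⟨h, .refl _⟩⟩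
  | node_right z h =>
    cases hs; cases ht
    exact ⟨le_rfl, fun _ => ⟨.refl _, h⟩⟩

inductive IsTail (r : PBT) : PBT → Prop
  | refl : IsTail r r
  | right (a : PBT) {b : PBT} : IsTail r b → IsTail r (node a b)

theorem IsTail.deg_le {r t : PBT} (h : IsTail r t) : r.deg ≤ t.deg := by
  induction h with
  | refl => exact le_rfl
  | right a _ ih => simp only [deg]; omega

theorem IsTail.eq_of_deg_eq {r t : PBT} (h : IsTail r t) (hd : r.deg = t.deg) : r = t := by
  cases h with
  | refl => rfl
  | right a h => have := h.deg_le; simp only [deg] at hd; omega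

theorem IsTail.unique {r r' t : PBT} (h : IsTail r t) (h' : IsTail r' t)
    (hd : r.deg = r'.deg) : r = r' := by
  induction h with
  | refl => exact (h'.eq_of_deg_eq hd.symm).symm
  | right a h ih =>
    cases h' with
    | refl => have := h.deg_le; simp only [deg] at hd; omega
    | right _ h' => exact ih h'

theorem IsTail.of_node {r a b : PBT} (h : IsTail r (node a b)) (hlt : r.deg < (node a b).deg) :
    IsTail r b := by
  cases h with
  | refl => exact absurd hlt (lt_irrefl _)
  | right _ h => exact h

theorem IsTail.under {r y : PBT} (x : PBT) (h : IsTail r y) : IsTail r (under x y) := by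
  induction x with
  | leaf => exact h
  | node a b _ ih => exact .right a ih

theorem IsTail.deg_of_under_node {r c d : PBT} {x : PBT} (h : IsTail r (PBT.under x (node c d))) :
    r.deg ≤ d.deg ∨ (node c d).deg ≤ r.deg := by
  induction x with
  | leaf =>
    cases h with
    | refl => exact .inr le_rfl
    | right _ h => exact .inl h.deg_le
  | node a b _ ih =>
    cases h with
    | refl => right; simp only [PBT.under, deg, deg_under]; omega
    | right _ h => exact ih h

theorem tle.exists_isTail {s t r : PBT} (h : tle s t) (hr : IsTail r s) :
    ∃ r', IsTail r' t ∧ r'.deg = r.deg ∧ tle r r' := by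
  induction h generalizing r with
  | refl => exact ⟨r, hr, rfl, .refl _⟩
  | trans _ _ ih₁ ih₂ =>
    obtain ⟨r₁, hr₁, hd₁, hle₁⟩ := ih₁ hr
    obtain ⟨r₂, hr₂, hd₂, hle₂⟩ := ih₂ hr₁
    exact ⟨r₂, hr₂, hd₂.trans hd₁, hle₁.trans hle₂⟩
  | rotate x y z =>
    cases hr with
    | refl => exact ⟨_, .refl, (tle.rotate x y z).deg_eq.symm, .rotate x y z⟩
    | right _ hr => exact ⟨r, .right _ (.right _ hr), rfl, .refl _⟩
  | node_left z h =>
    cases hr with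
    | refl => exact ⟨_, .refl, (h.node_left z).deg_eq.symm, h.node_left z⟩
    | right _ hr => exact ⟨r, .right _ hr, rfl, .refl _⟩
  | node_right z h ih =>
    cases hr with
    | refl => exact ⟨_, .refl, (h.node_right z).deg_eq.symm, h.node_right z⟩
    | right _ hr =>
      obtain ⟨r', hr', hd, hle⟩ := ih hr
      exact ⟨r', .right _ hr', hd, hle⟩

def cut : PBT → ℕ → PBT
  | leaf, _ => leaf
  | node a b, k => if b.deg = k then a else node a (cut b k)

theorem cut_node (a b : PBT) : cut (node a b) b.deg = a := by simp [cut]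

theorem cut_under_node (x c d : PBT) : cut (under x (node c d)) d.deg = under x c := by
  induction x with
  | leaf => exact cut_node c d
  | node a b _ ih =>
    have : (PBT.under b (node c d)).deg ≠ d.deg := by simp only [deg_under, deg]; omega
    simp only [PBT.under, cut, if_neg this, ih]

theorem tle.cut {s t r : PBT} (h : tle s t) (hs : IsTail r s) (ht : IsTail r t)
    (hlt : r.deg < s.deg) : tle (cut s r.deg) (cut t r.deg) := by
  induction h generalizing r with
  | refl => exact .refl _
  | @trans s m t h₁ h₂ ih₁ ih₂ =>
    obtain ⟨r₁, hr₁, hd₁, hle₁⟩ := h₁.exists_isTail hs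
    obtain ⟨r₂, hr₂, hd₂, hle₂⟩ := h₂.exists_isTail hr₁
    obtain rfl : r₂ = r := hr₂.unique ht (hd₂.trans hd₁)
    obtain rfl := hle₁.antisymm hle₂
    exact (ih₁ hs hr₁ hlt).trans (ih₂ hr₁ ht (h₁.deg_eq ▸ hlt))
  | rotate x y z =>
    have hz := hs.of_node hlt
    have hyz : (node y z).deg ≠ r.deg := by have := hz.deg_le; simp only [deg]; omega
    by_cases hzr : z.deg = r.deg
    · simp only [PBT.cut, if_neg hyz, hzr, if_true]; exact .refl _
    · simp only [PBT.cut, if_neg hyz, if_neg hzr]; exact .rotate _ _ _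
  | node_left z h =>
    have hz := hs.of_node hlt
    by_cases hzr : z.deg = r.deg
    · simp only [PBT.cut, hzr, if_true]; exact h
    · simp only [PBT.cut, if_neg hzr]; exact h.node_left _
  | @node_right x y z h ih =>
    have hx := hs.of_node hlt
    by_cases hxr : x.deg = r.deg
    · simp only [PBT.cut, hxr, ← h.deg_eq, if_true]; exact .refl _
    · have hy : IsTail r y := by
        cases ht with
        | refl => simp only [deg, ← h.deg_eq] at hlt; omega
        | right _ h => exact h
      have hlt' : r.deg < x.deg := lt_of_le_of_ne hx.deg_le (Ne.symm hxr)
      simp only [PBT.cut, if_neg hxr, ← h.deg_eq]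
      exact (ih hx hy hlt').node_right z

theorem σ_σ (x : PBT) : σ (σ x) = x := by
  induction x with
  | leaf => rfl
  | node a b iha ihb => simp only [σ, iha, ihb]

theorem σ_injective : Function.Injective σ :=
  Function.LeftInverse.injective σ_σ

theorem deg_σ (x : PBT) : (σ x).deg = x.deg := by
  induction x with
  | leaf => rfl
  | node a b iha ihb => simp only [σ, deg, iha, ihb]; omega

theorem σ_overOp (x y : PBT) : σ (overOp x y) = under (σ y) (σ x) := by
  induction y with
  | leaf => rfl
  | node a b iha _ => simp only [overOp, σ, under, iha]

theorem σ_under (x y : PBT) : σ (under x y) = overOp (σ y) (σ x) := by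
  induction x with
  | leaf => rfl
  | node a b _ ihb => simp only [under, σ, overOp, ihb]

theorem tle.σ {x y : PBT} (h : tle x y) : tle (σ y) (σ x) := by
  induction h with
  | refl => exact .refl _
  | trans _ _ ih₁ ih₂ => exact ih₂.trans ih₁
  | rotate x y z => exact .rotate _ _ _
  | node_left z _ ih => exact ih.node_right _
  | node_right z _ ih => exact ih.node_left _

theorem σ_mem_sum {x y z : PBT} (h : z ∈ sum x y) : σ z ∈ sum (σ y) (σ x) := by
  refine ⟨?_, ?_⟩
  · rw [← σ_under]; exact h.2.σ
  · rw [← σ_overOp]; exact h.1.σ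

theorem deg_of_mem_sum {x y z : PBT} (h : z ∈ sum x y) : z.deg = x.deg + y.deg := by
  rw [← h.1.deg_eq, deg_overOp]

theorem tle_overOp_node (a b y : PBT) : tle (overOp (node a b) y) (node a (overOp b y)) := by
  induction y with
  | leaf => exact .refl _
  | node c d ih _ => exact (ih.node_left d).trans (.rotate a _ d)

theorem tle_node_under (x c d : PBT) : tle (node (under x c) d) (under x (node c d)) := by
  induction x with
  | leaf => exact .refl _
  | node a b _ ih => exact (tle.rotate a _ d).trans (ih.node_right a)

theorem leaf_overOp (y : PBT) : overOp leaf y = y := by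
  induction y with
  | leaf => rfl
  | node a b ih _ => rw [overOp, ih]

theorem under_leaf (x : PBT) : under x leaf = x := by
  induction x with
  | leaf => rfl
  | node a b _ ih => rw [under, ih]

theorem overOp_mem_sum (x y : PBT) : overOp x y ∈ sum x y := by
  refine ⟨.refl _, ?_⟩
  induction x generalizing y with
  | leaf => rw [leaf_overOp]; exact .refl _
  | node a b _ ih =>
    cases y with
    | leaf => rw [under_leaf]; exact .refl _
    | node c d => exact (tle_overOp_node a b _).trans ((ih _).node_right a)

theorem sum_nonempty (x y : PBT) : (sum x y).Nonempty := ⟨_, overOp_mem_sum x y⟩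

theorem sum_leaf_right (x : PBT) : sum x leaf = {x} := by
  ext z
  simp only [sum, overOp, under_leaf, Set.mem_ofPred_eq, Set.mem_singleton_iff]
  exact ⟨fun h => h.2.antisymm h.1, fun h => h ▸ ⟨.refl _, .refl _⟩⟩

theorem sum_leaf_left (y : PBT) : sum leaf y = {y} := by
  ext z
  simp only [sum, leaf_overOp, under, Set.mem_ofPred_eq, Set.mem_singleton_iff]
  exact ⟨fun h => h.2.antisymm h.1, fun h => h ▸ ⟨.refl _, .refl _⟩⟩

theorem node_mem_sum_deg_right {x a b yl yr : PBT} (h : node a b ∈ sum x (node yl yr)) :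
    b.deg ≤ yr.deg ∨ (node yl yr).deg ≤ b.deg := by
  obtain ⟨r, hr, hrb, -⟩ := h.2.exists_isTail (.right a .refl)
  rw [← hrb]
  exact hr.deg_of_under_node

theorem node_mem_sum_deg_left {xl xr a b y : PBT} (h : node a b ∈ sum (node xl xr) y) :
    a.deg ≤ xl.deg ∨ (node xl xr).deg ≤ a.deg := by
  have := node_mem_sum_deg_right (σ_mem_sum h)
  simp only [deg, deg_σ] at this ⊢
  omega

/-- The lower end `x/y = (x/yˡ) ∨ yʳ` forces `deg b = deg yʳ`; the right arm of the upper end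
`x\y` then forces `b = yʳ`, and cutting `yʳ` off both sides gives `a ≤ x\yˡ`. -/
theorem node_mem_sum_of_deg_le_right {xl xr yl yr a b : PBT}
    (h : node a b ∈ sum (node xl xr) (node yl yr)) (hb : b.deg ≤ yr.deg) :
    a ∈ sum (node xl xr) yl ∧ b = yr := by
  have hdeg := deg_of_mem_sum h
  obtain ⟨hlo, hhi⟩ := h
  have hlo : tle (node (overOp (node xl xr) yl) yr) (node a b) := hlo
  obtain ⟨hle, hlo'⟩ := hlo.node_node
  obtain ⟨hXa, hyb⟩ := hlo' (by simp only [deg, deg_overOp] at hdeg hle ⊢; omega)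
  have hyr : IsTail yr (under (node xl xr) (node yl yr)) := .under _ (.right yl .refl)
  obtain ⟨r, hr, hrb, hbr⟩ := hhi.exists_isTail (.right a .refl)
  obtain rfl : r = yr := hr.unique hyr (hrb.trans (le_antisymm hb hyb.deg_eq.le))
  obtain rfl : b = r := hbr.antisymm hyb
  have hcut := hhi.cut (.right a .refl) hyr (by simp only [deg]; omega)
  rw [cut_node, cut_under_node] at hcut
  exact ⟨⟨hXa, hcut⟩, rfl⟩

theorem node_mem_sum_of_deg_le_left {xl xr yl yr a b : PBT}
    (h : node a b ∈ sum (node xl xr) (node yl yr)) (ha : a.deg ≤ xl.deg) :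
    a = xl ∧ b ∈ sum xr (node yl yr) := by
  obtain ⟨hb, ha⟩ := node_mem_sum_of_deg_le_right (σ_mem_sum h) (by simpa only [deg_σ] using ha)
  refine ⟨σ_injective ha, ?_⟩
  simpa only [σ_σ, σ] using σ_mem_sum hb

theorem node_mem_sum_node {xl xr yl yr a b : PBT} :
    node a b ∈ sum (node xl xr) (node yl yr) ↔
      (a = xl ∧ b ∈ sum xr (node yl yr)) ∨ (a ∈ sum (node xl xr) yl ∧ b = yr) := by
  constructor
  · intro h
    have hdeg := deg_of_mem_sum h
    rcases node_mem_sum_deg_right h with hb | hb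
    · exact .inr (node_mem_sum_of_deg_le_right h hb)
    rcases node_mem_sum_deg_left h with ha | ha
    · exact .inl (node_mem_sum_of_deg_le_left h ha)
    simp only [deg] at hdeg hb ha; omega
  · rintro (⟨rfl, hb⟩ | ⟨ha, rfl⟩)
    · exact ⟨(tle_overOp_node a xr _).trans (hb.1.node_right a), hb.2.node_right a⟩
    · exact ⟨ha.1.node_left b, (ha.2.node_left b).trans (tle_node_under _ yl b)⟩

theorem lsum_leaf_left (y : PBT) : lsum leaf y = {leaf} := by cases y <;> rfl

theorem lsum_node_left (p q y : PBT) : lsum (node p q) y = node p '' sum q y := by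
  cases y with
  | leaf => rw [sum_leaf_right, Set.image_singleton]; rfl
  | node => rfl

theorem rsum_leaf_right (x : PBT) : rsum x leaf = {leaf} := by cases x <;> rfl

theorem rsum_node_right (x u v : PBT) : rsum x (node u v) = (node · v) '' sum x u := by
  cases x with
  | leaf => rw [sum_leaf_left, Set.image_singleton]; rfl
  | node => rfl

theorem sum_eq_lsum_union_rsum (xl xr yl yr : PBT) :
    sum (node xl xr) (node yl yr) =
      lsum (node xl xr) (node yl yr) ∪ rsum (node xl xr) (node yl yr) := by
  rw [lsum_node_left, rsum_node_right]
  ext (_ | ⟨a, b⟩)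
  · simp only [Set.mem_union, Set.mem_image, reduceCtorEq, and_false, exists_false, or_self,
      iff_false]
    intro h
    have := deg_of_mem_sum h
    simp only [deg] at this
    omega
  · simp only [node_mem_sum_node, Set.mem_union, Set.mem_image, node.injEq]
    constructor
    · rintro (⟨rfl, hb⟩ | ⟨ha, rfl⟩)
      exacts [.inl ⟨b, hb, rfl, rfl⟩, .inr ⟨a, ha, rfl, rfl⟩]
    · rintro (⟨u, hu, rfl, rfl⟩ | ⟨v, hv, rfl, rfl⟩)
      exacts [.inl ⟨rfl, hu⟩, .inr ⟨hv, rfl⟩]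

theorem sum_assoc : ∀ a b c : PBT, ⋃ w ∈ sum a b, sum w c = ⋃ w ∈ sum b c, sum a w
  | leaf, b, c => by simp [sum_leaf_left]
  | a, leaf, c => by simp [sum_leaf_left, sum_leaf_right]
  | a, b, leaf => by simp [sum_leaf_right]
  | node al ar, node bl br, node cl cr => by
    have h₁ := Set.ext_iff.mp (sum_assoc ar (node bl br) (node cl cr))
    have h₂ := Set.ext_iff.mp (sum_assoc (node al ar) (node bl br) cl)
    ext z
    simp only [Set.mem_iUnion, exists_prop, sum_eq_lsum_union_rsum, lsum_node_left,
      rsum_node_right, Set.mem_union, Set.mem_image, or_and_right, exists_or,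
      exists_exists_and_eq_and] at h₁ h₂ ⊢
    constructor
    · rintro (⟨u, hu, ⟨x, hx, rfl⟩ | ⟨x, hx, rfl⟩⟩ | ⟨v, hv, ⟨x, hx, rfl⟩ | ⟨x, hx, rfl⟩⟩)
      · rcases (h₁ x).mp ⟨u, hu, hx⟩ with ⟨w, hw, hx⟩ | ⟨w, hw, hx⟩
        exacts [.inl ⟨w, hw, .inl ⟨x, hx, rfl⟩⟩, .inr ⟨w, hw, .inl ⟨x, hx, rfl⟩⟩]
      · obtain ⟨w, hw, hx⟩ := (h₂ x).mp (.inl ⟨u, hu, hx⟩)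
        exact .inr ⟨w, hw, .inr ⟨x, hx, rfl⟩⟩
      · exact .inl ⟨x, hx, .inr ⟨v, hv, rfl⟩⟩
      · obtain ⟨w, hw, hx⟩ := (h₂ x).mp (.inr ⟨v, hv, hx⟩)
        exact .inr ⟨w, hw, .inr ⟨x, hx, rfl⟩⟩
    · rintro (⟨u, hu, ⟨x, hx, rfl⟩ | ⟨x, hx, rfl⟩⟩ | ⟨v, hv, ⟨x, hx, rfl⟩ | ⟨x, hx, rfl⟩⟩)
      · obtain ⟨w, hw, hx⟩ := (h₁ x).mpr (.inl ⟨u, hu, hx⟩)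
        exact .inl ⟨w, hw, .inl ⟨x, hx, rfl⟩⟩
      · exact .inr ⟨x, hx, .inl ⟨u, hu, rfl⟩⟩
      · obtain ⟨w, hw, hx⟩ := (h₁ x).mpr (.inr ⟨v, hv, hx⟩)
        exact .inl ⟨w, hw, .inl ⟨x, hx, rfl⟩⟩
      · rcases (h₂ x).mpr ⟨v, hv, hx⟩ with ⟨w, hw, hx⟩ | ⟨w, hw, hx⟩
        exacts [.inl ⟨w, hw, .inr ⟨x, hx, rfl⟩⟩, .inr ⟨w, hw, .inr ⟨x, hx, rfl⟩⟩]

theorem lsum_lsum (x y z : PBT) : ⋃ t ∈ lsum x y, lsum t z = ⋃ u ∈ sum y z, lsum x u := by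
  cases x with
  | leaf => simp only [lsum_leaf_left, Set.biUnion_singleton, Set.biUnion_const (sum_nonempty y z)]
  | node p q =>
    simp only [lsum_node_left, Set.biUnion_image, ← Set.image_iUnion₂]
    rw [sum_assoc]

theorem rsum_lsum (x y z : PBT) : ⋃ t ∈ rsum x y, lsum t z = ⋃ u ∈ lsum y z, rsum x u := by
  cases y with
  | leaf => simp only [rsum_leaf_right, lsum_leaf_left, Set.biUnion_singleton]
  | node yl yr =>
    simp only [rsum_node_right, lsum_node_left, Set.biUnion_image]
    rw [Set.iUnion_image_left, Set.iUnion_image_right]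

theorem sum_rsum (x y z : PBT) : ⋃ t ∈ sum x y, rsum t z = ⋃ u ∈ rsum y z, rsum x u := by
  cases z with
  | leaf => simp only [rsum_leaf_right, Set.biUnion_singleton, Set.biUnion_const (sum_nonempty x y)]
  | node zl zr =>
    simp only [rsum_node_right, Set.biUnion_image, ← Set.image_iUnion₂]
    rw [sum_assoc]

theorem glsum_glsum (A B C : Set PBT) : glsum (glsum A B) C = glsum A (gsum B C) :=
  Set.bind₂_assoc lsum_lsum A B C

theorem glsum_grsum (A B C : Set PBT) : glsum (grsum A B) C = grsum A (glsum B C) :=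
  Set.bind₂_assoc rsum_lsum A B C

theorem grsum_gsum (A B C : Set PBT) : grsum (gsum A B) C = grsum A (grsum B C) :=
  Set.bind₂_assoc sum_rsum A B C

theorem gsum_eq_glsum_union_grsum {A B : Set PBT} (hA : leaf ∉ A) (hB : leaf ∉ B) :
    gsum A B = glsum A B ∪ grsum A B := by
  have hsplit : ∀ x ∈ A, ∀ y ∈ B, sum x y = lsum x y ∪ rsum x y := by
    rintro (_ | ⟨xl, xr⟩) hx (_ | ⟨yl, yr⟩) hy
    exacts [absurd hx hA, absurd hx hA, absurd hy hB, sum_eq_lsum_union_rsum xl xr yl yr]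
  calc gsum A B = ⋃ x ∈ A, ⋃ y ∈ B, (lsum x y ∪ rsum x y) :=
        Set.iUnion₂_congr fun x hx => Set.iUnion₂_congr fun y hy => hsplit x hx y hy
    _ = glsum A B ∪ grsum A B := by simp only [Set.iUnion_union_distrib]; rfl

theorem lsum_nonempty (x y : PBT) : (lsum x y).Nonempty := by
  cases x
  · simp [lsum_leaf_left]
  · simp [lsum_node_left, sum_nonempty]

theorem rsum_nonempty (x y : PBT) : (rsum x y).Nonempty := by
  cases y
  · simp [rsum_leaf_right]
  · simp [rsum_node_right, sum_nonempty]

theorem tmul_nonempty {B : Set PBT} (hB : B.Nonempty) (x : PBT) : (tmul x B).Nonempty := by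
  induction x with
  | leaf => exact Set.singleton_nonempty leaf
  | node l r ihl ihr =>
    obtain ⟨u, hu⟩ := ihl
    obtain ⟨b, hb⟩ := hB
    obtain ⟨v, hv⟩ := ihr
    obtain ⟨c, hc⟩ := rsum_nonempty u b
    obtain ⟨t, ht⟩ := lsum_nonempty c v
    exact ⟨t, Set.mem_biUnion (Set.mem_biUnion hu (Set.mem_biUnion hb hc)) (Set.mem_biUnion hv ht)⟩

theorem leaf_not_mem_tmul_node {B : Set PBT} (hB : leaf ∉ B) (l r : PBT) :
    leaf ∉ tmul (node l r) B := by
  intro h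
  obtain ⟨c, hc, v, -, ht⟩ := Set.mem_bind₂.mp h
  obtain ⟨u, -, b, hb, hc⟩ := Set.mem_bind₂.mp hc
  cases b with
  | leaf => exact hB hb
  | node bl br =>
    obtain ⟨w, -, rfl⟩ := (rsum_node_right u bl br).subset hc
    obtain ⟨w', -, ⟨⟩⟩ := (lsum_node_left w br v).subset ht

theorem glsum_biUnion_left (S : Set PBT) (A : PBT → Set PBT) (C : Set PBT) :
    glsum (⋃ w ∈ S, A w) C = ⋃ w ∈ S, glsum (A w) C :=
  Set.bind₂_biUnion_left lsum S A C

theorem glsum_biUnion_right (A S : Set PBT) (C : PBT → Set PBT) :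
    glsum A (⋃ w ∈ S, C w) = ⋃ w ∈ S, glsum A (C w) :=
  Set.bind₂_biUnion_right lsum A S C

theorem grsum_biUnion_left (S : Set PBT) (A : PBT → Set PBT) (C : Set PBT) :
    grsum (⋃ w ∈ S, A w) C = ⋃ w ∈ S, grsum (A w) C :=
  Set.bind₂_biUnion_left rsum S A C

theorem gsum_leaf_left (A : Set PBT) : gsum {leaf} A = A := by
  simp only [gsum, Set.biUnion_singleton, sum_leaf_left, Set.biUnion_of_singleton]

theorem gsum_leaf_right (A : Set PBT) : gsum A {leaf} = A := by
  simp only [gsum, Set.biUnion_singleton, sum_leaf_right, Set.biUnion_of_singleton]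

theorem gmul_singleton (x : PBT) (B : Set PBT) : gmul {x} B = tmul x B :=
  Set.biUnion_singleton x _

theorem gmul_union (A A' B : Set PBT) : gmul (A ∪ A') B = gmul A B ∪ gmul A' B :=
  Set.biUnion_union A A' _

section Distributivity

variable {B : Set PBT}

theorem gmul_lsum_node_of_gmul_sum {p q y : PBT}
    (h : gmul (sum q y) B = gsum (tmul q B) (tmul y B)) :
    gmul (lsum (node p q) y) B = glsum (tmul (node p q) B) (tmul y B) :=
  calc gmul (lsum (node p q) y) B
      = ⋃ w ∈ sum q y, glsum (grsum (tmul p B) B) (tmul w B) := by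
        rw [lsum_node_left]; exact Set.biUnion_image
    _ = glsum (grsum (tmul p B) B) (gsum (tmul q B) (tmul y B)) := by
        rw [← h, gmul, glsum_biUnion_right]
    _ = glsum (tmul (node p q) B) (tmul y B) := (glsum_glsum _ _ _).symm

theorem gmul_rsum_node_of_gmul_sum {x yl yr : PBT}
    (h : gmul (sum x yl) B = gsum (tmul x B) (tmul yl B)) :
    gmul (rsum x (node yl yr)) B = grsum (tmul x B) (tmul (node yl yr) B) :=
  calc gmul (rsum x (node yl yr)) B
      = ⋃ w ∈ sum x yl, glsum (grsum (tmul w B) B) (tmul yr B) := by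
        rw [rsum_node_right]; exact Set.biUnion_image
    _ = glsum (grsum (gsum (tmul x B) (tmul yl B)) B) (tmul yr B) := by
        rw [← h, gmul, grsum_biUnion_left, glsum_biUnion_left]
    _ = grsum (tmul x B) (tmul (node yl yr) B) := by rw [grsum_gsum, glsum_grsum]; rfl

theorem gmul_sum (hB : leaf ∉ B) : ∀ x y : PBT, gmul (sum x y) B = gsum (tmul x B) (tmul y B)
  | leaf, y => by rw [sum_leaf_left, gmul_singleton, tmul, gsum_leaf_left]
  | x, leaf => by rw [sum_leaf_right, gmul_singleton, tmul, gsum_leaf_right]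
  | node xl xr, node yl yr => by
    rw [sum_eq_lsum_union_rsum, gmul_union,
      gmul_lsum_node_of_gmul_sum (gmul_sum hB xr _), gmul_rsum_node_of_gmul_sum (gmul_sum hB _ yl),
      gsum_eq_glsum_union_grsum (leaf_not_mem_tmul_node hB _ _) (leaf_not_mem_tmul_node hB _ _)]

theorem gmul_lsum (hB : leaf ∉ B) (hne : B.Nonempty) :
    ∀ x y : PBT, gmul (lsum x y) B = glsum (tmul x B) (tmul y B)
  | leaf, y => by
    simp only [lsum_leaf_left, gmul_singleton, tmul, glsum, Set.biUnion_singleton,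
      Set.biUnion_const (tmul_nonempty hne y)]
  | node _ q, y => gmul_lsum_node_of_gmul_sum (gmul_sum hB q y)

theorem gmul_rsum (hB : leaf ∉ B) (hne : B.Nonempty) :
    ∀ x y : PBT, gmul (rsum x y) B = grsum (tmul x B) (tmul y B)
  | x, leaf => by
    simp only [rsum_leaf_right, gmul_singleton, tmul, grsum, Set.biUnion_singleton,
      Set.biUnion_const (tmul_nonempty hne x)]
  | x, node yl _ => gmul_rsum_node_of_gmul_sum (gmul_sum hB x yl)

theorem gmul_bind₂ {f : PBT → PBT → Set PBT}
    (hf : ∀ x y, gmul (f x y) B = Set.bind₂ f (tmul x B) (tmul y B)) (A A' : Set PBT) :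
    gmul (Set.bind₂ f A A') B = Set.bind₂ f (gmul A B) (gmul A' B) :=
  calc gmul (Set.bind₂ f A A') B = ⋃ x ∈ A, ⋃ y ∈ A', gmul (f x y) B := by
        simp only [gmul, Set.bind₂, Set.biUnion_iUnion]
    _ = ⋃ x ∈ A, ⋃ y ∈ A', Set.bind₂ f (tmul x B) (tmul y B) := by simp only [hf]
    _ = Set.bind₂ f (gmul A B) (gmul A' B) := by
        simp only [gmul]
        rw [Set.bind₂_biUnion_left]
        simp only [Set.bind₂_biUnion_right]

end Distributivity

end PBT

open PBT in
theorem gmul_left_distrib_general (m : ℕ) (hm : 0 < m)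
    (A A' B : Set PBT) (hB : Grove m B) :
    gmul (glsum A A') B = glsum (gmul A B) (gmul A' B) ∧
    gmul (grsum A A') B = grsum (gmul A B) (gmul A' B) ∧
    gmul (gsum A A') B = gsum (gmul A B) (gmul A' B) := by
  have hleaf : leaf ∉ B := fun h => hm.ne' (hB.2 leaf h).symm
  exact ⟨gmul_bind₂ (gmul_lsum hleaf hB.1) A A', gmul_bind₂ (gmul_rsum hleaf hB.1) A A',
    gmul_bind₂ (gmul_sum hleaf) A A'⟩

open PBT in
/-- multiplication of groves is left distributive over the left
sum, the right sum and the sum. -/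
theorem gmul_left_distrib (n n' m : ℕ) (hn : 0 < n) (hn' : 0 < n') (hm : 0 < m)
    (A A' B : Set PBT) (hA : Grove n A) (hA' : Grove n' A') (hB : Grove m B) :
    gmul (glsum A A') B = glsum (gmul A B) (gmul A' B) ∧
    gmul (grsum A A') B = grsum (gmul A B) (gmul A' B) ∧
    gmul (gsum A A') B = gsum (gmul A B) (gmul A' B) :=
  gmul_left_distrib_general m hm A A' B hB
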